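/- Let ℓ be a prime and r ≥ 1, N ∈ ℤ with gcd(ℓ, N) = 1, and a₁,…,a_r ∈ ℤ distinct. Then the polynomial g(X) = ℓ N⁶ ∏_{i=1}^r (X − a_i)⁶ + 1 is separable over ℚ. -/
import Mathlib


open Polynomial

/-- Over a field, if the reverse of `g` is irreducible, `g` has positive degree and nonzero
constant coefficient, then `g` is irreducible. -/
lemma irreducible_of_reverse_irreducible {K : Type*} [Field K] {g : K[X]}
    (h0 : g.coeff 0 ≠ 0) (hd : 0 < g.natDegree) (h : Irreducible g.reverse) :
    Irreducible g := by
  have hg0 : g ≠ 0 := fun hh => by simp [hh] at h0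
  have key : ∀ p q : K[X], g = p * q → IsUnit p.reverse → IsUnit p := by
    intro p q hpq hu
    have hp0 : p ≠ 0 := left_ne_zero_of_mul (hpq ▸ hg0)
    have hc0 : p.coeff 0 ≠ 0 := by
      intro hc
      have hX : (X : K[X]) ∣ g := hpq ▸ dvd_mul_of_dvd_left (X_dvd_iff.mpr hc) q
      exact h0 (X_dvd_iff.mp hX)
    have ht : p.natTrailingDegree = 0 := natTrailingDegree_eq_zero.mpr (Or.inr hc0)
    have hdp : p.natDegree = 0 := by
      have h1 := natDegree_eq_zero_of_isUnit hu
      rw [reverse_natDegree, ht, Nat.sub_zero] at h1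
      exact h1
    have : p = C (p.coeff 0) := eq_C_of_natDegree_eq_zero hdp
    rw [this]
    exact isUnit_C.mpr (isUnit_iff_ne_zero.mpr hc0)
  constructor
  · intro hu
    exact hd.ne' (natDegree_eq_zero_of_isUnit hu)
  · intro p q hpq
    have hrev : g.reverse = p.reverse * q.reverse := by
      rw [hpq, reverse_mul_of_domain]
    rcases h.isUnit_or_isUnit hrev with h1 | h1
    · exact Or.inl (key p q hpq h1)
    · exact Or.inr (key q p (by rw [hpq, mul_comm]) h1)

theorem stmt_12 (ℓ : ℕ) (hl : ℓ.Prime) (r : ℕ) (hr : 1 ≤ r) (N : ℤ)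
    (hcop : Int.gcd (ℓ : ℤ) N = 1) (a : Fin r → ℤ) (ha : Function.Injective a) :
    (C ((ℓ : ℚ) * (N : ℚ) ^ 6) * ∏ i, (X - C ((a i : ℚ))) ^ 6 + 1 :
      Polynomial ℚ).Separable := by
  -- basic arithmetic facts
  have hlZ : Prime (ℓ : ℤ) := Nat.prime_iff_prime_int.mp hl
  have hlne : (ℓ : ℤ) ≠ 0 := hlZ.ne_zero
  have hco : IsCoprime (ℓ : ℤ) N := Int.isCoprime_iff_gcd_eq_one.mpr hcop
  have hlN : ¬ (ℓ : ℤ) ∣ N := fun h => hlZ.not_unit (hco.isUnit_of_dvd' dvd_rfl h)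
  have hN0 : N ≠ 0 := fun h => hlN (h ▸ dvd_zero _)
  set c : ℤ := (ℓ : ℤ) * N ^ 6 with hc
  have hc0 : c ≠ 0 := mul_ne_zero hlne (pow_ne_zero _ hN0)
  have hlc : (ℓ : ℤ) ∣ c := Dvd.intro _ rfl
  -- the integral polynomial
  set P6 : ℤ[X] := ∏ i, (X - C (a i)) ^ 6 with hP6
  set G : ℤ[X] := C c * P6 + 1 with hG
  have hP6monic : P6.Monic :=
    monic_prod_of_monic _ _ fun i _ => (monic_X_sub_C (a i)).pow 6
  have hP6deg : P6.natDegree = 6 * r := by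
    rw [hP6, natDegree_prod _ _ fun i _ => pow_ne_zero 6 (X_sub_C_ne_zero (a i))]
    simp only [natDegree_pow, natDegree_X_sub_C]
    simp [mul_comm]
  have hP60 : P6 ≠ 0 := hP6monic.ne_zero
  have hCP6deg : (C c * P6).natDegree = 6 * r := by
    rw [natDegree_C_mul hc0, hP6deg]
  have hGdeg : G.natDegree = 6 * r := by
    rw [hG, show (1 : ℤ[X]) = C 1 from (map_one C).symm, natDegree_add_C, hCP6deg]
  have hrpos : 0 < 6 * r := by omega
  -- coefficients of G
  have hGcoeff : ∀ n, G.coeff n = c * P6.coeff n + (if n = 0 then 1 else 0) := by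
    intro n
    rw [hG, coeff_add, coeff_C_mul]
    congr 1
    simp [coeff_one]
  have hGlead : G.leadingCoeff = c := by
    rw [leadingCoeff, hGdeg, hGcoeff, if_neg hrpos.ne',
      show P6.coeff (6 * r) = 1 by
        have := hP6monic.leadingCoeff
        rwa [leadingCoeff, hP6deg] at this]
    ring
  have hG0 : G.coeff 0 = c * P6.coeff 0 + 1 := by rw [hGcoeff]; simp
  have hlG0 : ¬ (ℓ : ℤ) ∣ G.coeff 0 := by
    rw [hG0]
    intro h
    have : (ℓ : ℤ) ∣ 1 := (dvd_add_right (hlc.mul_right _)).mp h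
    exact hlZ.not_unit (isUnit_of_dvd_one this)
  have hG0ne : G.coeff 0 ≠ 0 := fun h => hlG0 (h ▸ dvd_zero _)
  have hGtd : G.natTrailingDegree = 0 := natTrailingDegree_eq_zero.mpr (Or.inr hG0ne)
  have hGne : G ≠ 0 := fun h => hG0ne (by simp [h])
  have hGmid : ∀ n, 0 < n → (ℓ : ℤ) ∣ G.coeff n := by
    intro n hn
    rw [hGcoeff, if_neg hn.ne']
    simpa using hlc.mul_right _
  -- the reverse of G is Eisenstein at ℓ
  set E : ℤ[X] := G.reverse with hE
  have hEdeg : E.natDegree = 6 * r := by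
    rw [hE, reverse_natDegree, hGtd, Nat.sub_zero, hGdeg]
  have hEne : E ≠ 0 := by
    rw [hE, Ne, reverse_eq_zero]; exact hGne
  have hElead : E.leadingCoeff = G.coeff 0 := by
    rw [hE, reverse_leadingCoeff, trailingCoeff, hGtd]
  have hE0 : E.coeff 0 = c := by rw [hE, coeff_zero_reverse, hGlead]
  have hEcoeff : ∀ n, n ≤ 6 * r → E.coeff n = G.coeff (6 * r - n) := by
    intro n hn
    rw [hE, coeff_reverse, hGdeg, revAt_le hn]
  set I : Ideal ℤ := Ideal.span {(ℓ : ℤ)} with hI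
  have hIp : I.IsPrime := (Ideal.span_singleton_prime hlne).mpr hlZ
  have hEprim : E.IsPrimitive := by
    intro t ht
    rw [Polynomial.C_dvd_iff_dvd_coeff] at ht
    have h1 : t ∣ c := hE0 ▸ ht 0
    have h2 : t ∣ c * P6.coeff 0 + 1 := by
      have := ht (6 * r)
      rwa [hEcoeff (6 * r) le_rfl, Nat.sub_self, hG0] at this
    exact isUnit_of_dvd_one ((dvd_add_right (h1.mul_right _)).mp h2)
  have hEirr : Irreducible E := by
    apply irreducible_of_eisenstein_criterion hIp
    · rw [hElead, hI, Ideal.mem_span_singleton]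
      exact hlG0
    · intro n hn
      have hn' : n < 6 * r := by
        have hd : E.degree = (6 * r : ℕ) := by
          rw [degree_eq_natDegree hEne, hEdeg]
        rw [hd] at hn
        exact_mod_cast hn
      rw [hEcoeff n hn'.le, hI, Ideal.mem_span_singleton]
      exact hGmid _ (by omega)
    · rw [degree_eq_natDegree hEne, hEdeg]
      exact_mod_cast hrpos
    · rw [hE0, hI, Ideal.span_singleton_pow, Ideal.mem_span_singleton]
      intro h
      have h' : (ℓ : ℤ) * (ℓ : ℤ) ∣ (ℓ : ℤ) * N ^ 6 := by
        rwa [← sq]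
      have : (ℓ : ℤ) ∣ N ^ 6 := (mul_dvd_mul_iff_left hlne).mp h'
      exact hlN (hlZ.dvd_of_dvd_pow this)
    · exact hEprim
  -- transfer to ℚ
  set φ : ℤ →+* ℚ := Int.castRingHom ℚ with hφ
  have hφinj : Function.Injective φ := Int.cast_injective
  set gQ : ℚ[X] := C ((ℓ : ℚ) * (N : ℚ) ^ 6) * ∏ i, (X - C ((a i : ℚ))) ^ 6 + 1 with hgQ
  have hmap : G.map φ = gQ := by
    rw [hG, hgQ, hP6]
    simp only [Polynomial.map_add, Polynomial.map_mul, Polynomial.map_one, Polynomial.map_prod,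
      Polynomial.map_pow, Polynomial.map_sub, Polynomial.map_C, Polynomial.map_X]
    simp only [hφ, Int.coe_castRingHom]
    congr 2
    exact congrArg C (by rw [hc]; push_cast; ring)
  have hmapdeg : (G.map φ).natDegree = G.natDegree := natDegree_map_eq_of_injective hφinj G
  have hrevmap : gQ.reverse = E.map φ := by
    rw [← hmap, hE, reverse, reverse, hmapdeg, reflect_map]
  have hgQirr : Irreducible gQ := by
    apply irreducible_of_reverse_irreducible
    · rw [← hmap, coeff_map]
      exact fun h => hG0ne (hφinj (by simpa using h))
    · rw [← hmap, hmapdeg, hGdeg]; exact hrpos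
    · rw [hrevmap]
      exact (Polynomial.IsPrimitive.Int.irreducible_iff_irreducible_map_cast hEprim).mp hEirr
  exact hgQirr.separable
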